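/- arXiv:2008.03385 — 9 statements merged into one kernel-verified Lean document; each statement's English description precedes it below -/
import Mathlib

section
/- Let A, B be symmetric real n×n matrices such that I + B is positive definite, and let λᵢ be a real number. Then the number of eigenvalues of A that are less than λᵢ equals the number of eigenvalues λ of the generalized eigenvalue problem (A + λᵢ B)u = λ(I + B)u that are less than λᵢ; in particular, λᵢ is the i-th largest eigenvalue of A if and only if λᵢ is the i-th largest eigenvalue of the generalized eigenvalue problem (A + λᵢ B)u = λ(I + B)u. -/
open Matrix

/-- The positive semidefinite square root of a positive semidefinite matrix
(the definition `Matrix.PosSemidef.sqrt` of the older Mathlib, since removed). -/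
noncomputable def Matrix.PosSemidef.sqrt {n 𝕜 : Type*} [Fintype n] [RCLike 𝕜] [PartialOrder 𝕜] [DecidableEq n]
    {A : Matrix n n 𝕜} (hA : A.PosSemidef) : Matrix n n 𝕜 :=
  (hA.1.eigenvectorUnitary : Matrix n n 𝕜) *
    diagonal (((↑) : ℝ → 𝕜) ∘ Real.sqrt ∘ hA.1.eigenvalues) *
  (star hA.1.eigenvectorUnitary : Matrix n n 𝕜)

/-!
Since `S (1 + B) S = 1`, the shifted matrix `S (A + t B) S - t` equals `S (A - t) S`, so it is
congruent to `A - t`. By Sylvester's law of inertia the quadratic forms of congruent matrices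
have the same negative index, and diagonalizing a symmetric `M` in an orthonormal eigenbasis
shows that the negative index of `M - t` is the number of eigenvalues of `M` below `t`.
-/

namespace Matrix

variable {n R : Type*} [Fintype n] [DecidableEq n] [CommRing R]

lemma toQuadraticForm'_apply (M : Matrix n n R) (x : n → R) :
    M.toQuadraticForm' x = x ⬝ᵥ M *ᵥ x := by
  simp [toQuadraticForm', toLinearMap₂'_apply']

lemma toQuadraticForm'_diagonal (d : n → R) :
    (diagonal d).toQuadraticForm' = QuadraticMap.weightedSumSquares R d := by
  ext x
  simp [toQuadraticForm'_apply, dotProduct, mulVec_diagonal, mul_left_comm]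

lemma toQuadraticForm'_transpose_mul_mul_equivalent (M : Matrix n n R) {P : Matrix n n R}
    (hP : IsUnit P.det) :
    (Pᵀ * M * P).toQuadraticForm'.Equivalent M.toQuadraticForm' := by
  refine ⟨⟨toLinearEquiv (Pi.basisFun R n) P hP, fun x => ?_⟩⟩
  show M.toQuadraticForm' (toLin' P x) = _
  rw [toLin'_apply, toQuadraticForm'_apply, toQuadraticForm'_apply, ← mulVec_mulVec,
    ← mulVec_mulVec, eq_comm, dotProduct_mulVec, vecMul_transpose]

lemma IsHermitian.toQuadraticForm'_sub_smul_one_equivalent {M : Matrix n n ℝ}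
    (hM : M.IsHermitian) (t : ℝ) :
    (M - t • 1).toQuadraticForm'.Equivalent
      (QuadraticMap.weightedSumSquares ℝ fun j => hM.eigenvalues j - t) := by
  set U : Matrix n n ℝ := (hM.eigenvectorUnitary : Matrix n n ℝ)
  have hU : U * Uᵀ = 1 := by
    rw [← conjTranspose_eq_transpose_of_trivial, ← star_eq_conjTranspose]
    exact Unitary.coe_mul_star_self _
  have hdiag : M - t • 1 = Uᵀᵀ * diagonal (fun j => hM.eigenvalues j - t) * Uᵀ := by
    conv_lhs => rw [hM.spectral_theorem, Unitary.conjStarAlgAut_apply, ← hU]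
    have hshift : diagonal (fun j => hM.eigenvalues j - t) =
        diagonal (RCLike.ofReal ∘ hM.eigenvalues) - t • 1 := by
      ext i j
      by_cases h : i = j <;> simp [h]
    rw [transpose_transpose, hshift, Matrix.mul_sub, Matrix.sub_mul, Matrix.mul_smul,
      Matrix.smul_mul, Matrix.mul_one, star_eq_conjTranspose,
      conjTranspose_eq_transpose_of_trivial]
  have hUdet : IsUnit Uᵀ.det := by
    rw [det_transpose]
    exact UnitaryGroup.det_isUnit hM.eigenvectorUnitary
  rw [hdiag, ← toQuadraticForm'_diagonal]
  exact toQuadraticForm'_transpose_mul_mul_equivalent _ hUdet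

lemma IsHermitian.sigNeg_toQuadraticForm'_sub_smul_one {M : Matrix n n ℝ}
    (hM : M.IsHermitian) (t : ℝ) :
    sigNeg (M - t • 1).toQuadraticForm' =
      Fintype.card {j // hM.eigenvalues j < t} := by
  rw [QuadraticForm.sigNeg_of_equiv_weightedSumSquares
    (hM.toQuadraticForm'_sub_smul_one_equivalent t)]
  simp [sub_neg, Set.ncard_eq_toFinset_card', Fintype.card_subtype]

section MatrixOrder

open scoped MatrixOrder

lemma PosSemidef.sqrt_eq_cfcSqrt {A : Matrix n n ℝ} (hA : A.PosSemidef) :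
    hA.sqrt = CFC.sqrt A := by
  rw [CFC.sqrt_eq_real_sqrt A hA.nonneg, cfcₙ_eq_cfc, hA.1.cfc_eq]
  -- `hA.sqrt` is `hA.1.cfc Real.sqrt` with `conjStarAlgAut` unfolded
  rfl

lemma PosSemidef.sqrt_mul_sqrt {A : Matrix n n ℝ} (hA : A.PosSemidef) :
    hA.sqrt * hA.sqrt = A := by
  rw [hA.sqrt_eq_cfcSqrt, CFC.sqrt_mul_sqrt_self A hA.nonneg]

lemma PosSemidef.transpose_sqrt {A : Matrix n n ℝ} (hA : A.PosSemidef) :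
    hA.sqrtᵀ = hA.sqrt := by
  rw [hA.sqrt_eq_cfcSqrt]
  exact (CFC.sqrt_nonneg A).isSelfAdjoint

end MatrixOrder

lemma PosDef.isUnit_det_sqrt {A : Matrix n n ℝ} (hA : A.PosDef) :
    IsUnit hA.posSemidef.sqrt.det := by
  have h := (isUnit_iff_isUnit_det A).mp hA.isUnit
  rw [← hA.posSemidef.sqrt_mul_sqrt, det_mul, IsUnit.mul_iff] at h
  exact h.1

lemma PosDef.inv_sqrt_mul_mul_inv_sqrt {A : Matrix n n ℝ} (hA : A.PosDef) :
    hA.posSemidef.sqrt⁻¹ * A * hA.posSemidef.sqrt⁻¹ = 1 := by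
  set Q := hA.posSemidef.sqrt
  have hQ := hA.isUnit_det_sqrt
  conv_lhs => rw [← hA.posSemidef.sqrt_mul_sqrt]
  rw [← Matrix.mul_assoc, nonsing_inv_mul Q hQ, Matrix.one_mul, mul_nonsing_inv Q hQ]

end Matrix

theorem stmt_0_general {n : ℕ} (A B : Matrix (Fin n) (Fin n) ℝ)
    (hA : A.IsHermitian)
    (hIB : (1 + B).PosDef) (t : ℝ)
    (S : Matrix (Fin n) (Fin n) ℝ) (hS : S = (hIB.posSemidef.sqrt)⁻¹)
    (hG : (S * (A + t • B) * S).IsHermitian) :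
    Fintype.card {j // hA.eigenvalues j < t} =
      Fintype.card {j // hG.eigenvalues j < t} := by
  have hSdet : IsUnit S.det := hS ▸ isUnit_nonsing_inv_det _ hIB.isUnit_det_sqrt
  have hSt : Sᵀ = S := by rw [hS, transpose_nonsing_inv, hIB.posSemidef.transpose_sqrt]
  have hSBS : S * (1 + B) * S = 1 := hS ▸ hIB.inv_sqrt_mul_mul_inv_sqrt
  have hcongr : Sᵀ * (A - t • 1) * S = S * (A + t • B) * S - t • 1 :=
    calc Sᵀ * (A - t • 1) * S = S * (A + t • B) * S - t • (S * (1 + B) * S) := by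
          rw [hSt]
          simp only [mul_add, add_mul, mul_sub, sub_mul, mul_smul_comm, smul_mul_assoc, mul_one]
          module
      _ = S * (A + t • B) * S - t • 1 := by rw [hSBS]
  rw [← hA.sigNeg_toQuadraticForm'_sub_smul_one, ← hG.sigNeg_toQuadraticForm'_sub_smul_one,
    ← hcongr, (toQuadraticForm'_transpose_mul_mul_equivalent _ hSdet).sigNeg_eq]

/-- Lemma (Sylvester-type eigenvalue count): for symmetric `A`, `B` with `1 + B`
positive definite, the number of eigenvalues of `A` below `t` equals the number of
eigenvalues of the generalized eigenvalue problem `(A + t•B)u = λ(1+B)u`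
(i.e. of `(1+B)^{-1/2}(A + t•B)(1+B)^{-1/2}`) below `t`. -/
theorem stmt_0 {n : ℕ} (A B : Matrix (Fin n) (Fin n) ℝ)
    (hA : A.IsHermitian) (hB : B.IsHermitian)
    (hIB : (1 + B).PosDef) (t : ℝ)
    (S : Matrix (Fin n) (Fin n) ℝ) (hS : S = (hIB.posSemidef.sqrt)⁻¹)
    (hG : (S * (A + t • B) * S).IsHermitian) :
    Fintype.card {j // hA.eigenvalues j < t} =
      Fintype.card {j // hG.eigenvalues j < t} :=
  stmt_0_general A B hA hIB t S hS hG
end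

section
/- Let A₁, B₁, C₁ be symmetric n×n real matrices and A₂, B₂, C₂ symmetric m×m real matrices. Suppose nonzero vectors u ∈ ℝⁿ, v ∈ ℝᵐ and scalars λ, μ satisfy (A₁ + λB₁ + μC₁)u = 0 and (A₂ + λB₂ + μC₂)v = 0. Then the Kronecker product u ⊗ v satisfies M₁(u⊗v) + λ M₀(u⊗v) = 0 and M₂(u⊗v) + μ M₀(u⊗v) = 0, where M₀ = B₁⊗C₂ − C₁⊗B₂, M₁ = A₁⊗C₂ − C₁⊗A₂, M₂ = B₁⊗A₂ − A₁⊗B₂. -/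
open Matrix Kronecker

lemma kron_mulVec {n m : ℕ} (X : Matrix (Fin n) (Fin n) ℝ) (Y : Matrix (Fin m) (Fin m) ℝ)
    (u : Fin n → ℝ) (v : Fin m → ℝ) (p : Fin n × Fin m) :
    (X ⊗ₖ Y).mulVec (fun p => u p.1 * v p.2) p = X.mulVec u p.1 * Y.mulVec v p.2 := by
  simp only [Matrix.mulVec, dotProduct, kroneckerMap_apply, Fintype.sum_prod_type,
    Finset.sum_mul, Finset.mul_sum]
  rw [Finset.sum_comm]
  exact Finset.sum_congr rfl fun j _ => Finset.sum_congr rfl fun i _ => by ring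

/-- A solution of the two-parameter eigenvalue problem gives a rank-one solution of the
coupled generalized eigenvalue problems with the operator determinants `M₀, M₁, M₂`. -/
theorem stmt_2 {n m : ℕ}
    (A₁ B₁ C₁ : Matrix (Fin n) (Fin n) ℝ) (A₂ B₂ C₂ : Matrix (Fin m) (Fin m) ℝ)
    (hA₁ : A₁.IsSymm) (hB₁ : B₁.IsSymm) (hC₁ : C₁.IsSymm)
    (hA₂ : A₂.IsSymm) (hB₂ : B₂.IsSymm) (hC₂ : C₂.IsSymm)
    (u : Fin n → ℝ) (v : Fin m → ℝ) (hu : u ≠ 0) (hv : v ≠ 0) (lam mu : ℝ)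
    (h1 : (A₁ + lam • B₁ + mu • C₁).mulVec u = 0)
    (h2 : (A₂ + lam • B₂ + mu • C₂).mulVec v = 0)
    (M₀ M₁ M₂ : Matrix (Fin n × Fin m) (Fin n × Fin m) ℝ)
    (hM₀ : M₀ = B₁ ⊗ₖ C₂ - C₁ ⊗ₖ B₂)
    (hM₁ : M₁ = A₁ ⊗ₖ C₂ - C₁ ⊗ₖ A₂)
    (hM₂ : M₂ = B₁ ⊗ₖ A₂ - A₁ ⊗ₖ B₂)
    (w : Fin n × Fin m → ℝ) (hw : w = fun p => u p.1 * v p.2) :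
    M₁.mulVec w + lam • M₀.mulVec w = 0 ∧ M₂.mulVec w + mu • M₀.mulVec w = 0 := by
  subst hM₀ hM₁ hM₂ hw
  have h1' : ∀ i, A₁.mulVec u i = -(lam * B₁.mulVec u i + mu * C₁.mulVec u i) := by
    intro i
    have := congrFun h1 i
    simp [Matrix.add_mulVec, Matrix.smul_mulVec] at this
    linarith
  have h2' : ∀ j, A₂.mulVec v j = -(lam * B₂.mulVec v j + mu * C₂.mulVec v j) := by
    intro j
    have := congrFun h2 j
    simp [Matrix.add_mulVec, Matrix.smul_mulVec] at this
    linarith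
  constructor <;>
  · funext p
    simp only [Pi.add_apply, Pi.smul_apply, Matrix.sub_mulVec, Pi.sub_apply, Pi.zero_apply,
      smul_eq_mul, kron_mulVec, h1' p.1, h2' p.2]
    ring
end

section
/- Let A₁, B₁, C₁ be symmetric n×n real matrices and A₂, B₂, C₂ symmetric m×m real matrices, with C₁ negative definite and C₂ positive definite. Suppose u ∈ ℝⁿ, v ∈ ℝᵐ are nonzero and λ ∈ ℝ satisfies (A₁⊗C₂ − C₁⊗A₂)(u⊗v) + λ(B₁⊗C₂ − C₁⊗B₂)(u⊗v) = 0. Then there exists μ ∈ ℝ such that (A₁ + λB₁ + μC₁)u = 0 and (A₂ + λB₂ + μC₂)v = 0. -/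
open Matrix Kronecker

/-!
Put `a = (A₁ + λB₁)u`, `b = C₂v`, `c = C₁u`, `d = (A₂ + λB₂)v`. On the rank-one vector `u ⊗ v`
the eigenvalue equation reads `a ⊗ b = c ⊗ d`. Definiteness makes `C₁, C₂` invertible, so
`b, c ≠ 0`, and two equal nonzero rank-one tensors have proportional factors: `a = t c`,
`d = t b`. Then `μ = -t` solves both equations.
-/

theorem Matrix.kronecker_mulVec_mul {R ι κ : Type*} [CommSemiring R]
    [Fintype ι] [Fintype κ] (X : Matrix ι ι R) (Y : Matrix κ κ R) (u : ι → R) (v : κ → R) :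
    (X ⊗ₖ Y) *ᵥ (fun p => u p.1 * v p.2) = fun p => (X *ᵥ u) p.1 * (Y *ᵥ v) p.2 := by
  ext p
  simp only [mulVec, dotProduct, kroneckerMap_apply, Fintype.sum_prod_type, Finset.sum_mul_sum]
  exact Finset.sum_congr rfl fun i _ => Finset.sum_congr rfl fun j _ => by ring

theorem exists_eq_smul_of_mul_eq_mul {K ι κ : Type*} [Field K] {a c : ι → K} {b d : κ → K}
    (hb : b ≠ 0) (hc : c ≠ 0) (h : ∀ i j, a i * b j = c i * d j) :
    ∃ t : K, a = t • c ∧ d = t • b := by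
  obtain ⟨j, hj⟩ := Function.ne_iff.mp hb
  obtain ⟨i, hi⟩ := Function.ne_iff.mp hc
  have ha : a = (d j / b j) • c := funext fun k => by
    rw [Pi.smul_apply, smul_eq_mul, div_mul_eq_mul_div, eq_div_iff hj, mul_comm (d j), ← h]
  refine ⟨d j / b j, ha, funext fun k => mul_left_cancel₀ hi ?_⟩
  rw [← h, ha, Pi.smul_apply, Pi.smul_apply, smul_eq_mul, smul_eq_mul]
  ring

theorem Matrix.PosDef.mulVec_ne_zero {K ι : Type*} [Field K] [PartialOrder K] [StarRing K]
    [Fintype ι] [DecidableEq ι] {M : Matrix ι ι K} (hM : M.PosDef) {x : ι → K} (hx : x ≠ 0) :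
    M *ᵥ x ≠ 0 := by
  simpa using (mulVec_injective_of_isUnit hM.isUnit).ne hx

theorem stmt_3_general {n m : ℕ}
    (A₁ B₁ C₁ : Matrix (Fin n) (Fin n) ℝ) (A₂ B₂ C₂ : Matrix (Fin m) (Fin m) ℝ)
    (hC₁neg : (-C₁).PosDef) (hC₂pos : C₂.PosDef)
    (u : Fin n → ℝ) (v : Fin m → ℝ) (hu : u ≠ 0) (hv : v ≠ 0) (lam : ℝ)
    (w : Fin n × Fin m → ℝ) (hw : w = fun p => u p.1 * v p.2)
    (heig : (A₁ ⊗ₖ C₂ - C₁ ⊗ₖ A₂).mulVec w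
        + lam • (B₁ ⊗ₖ C₂ - C₁ ⊗ₖ B₂).mulVec w = 0) :
    ∃ mu : ℝ, (A₁ + lam • B₁ + mu • C₁).mulVec u = 0 ∧
      (A₂ + lam • B₂ + mu • C₂).mulVec v = 0 := by
  subst hw
  have hrankOne : ∀ i j, ((A₁ + lam • B₁) *ᵥ u) i * (C₂ *ᵥ v) j
      = (C₁ *ᵥ u) i * ((A₂ + lam • B₂) *ᵥ v) j := fun i j => by
    have h := congrFun heig (i, j)
    simp only [sub_mulVec, add_mulVec, smul_mulVec, kronecker_mulVec_mul,
      Pi.add_apply, Pi.sub_apply, Pi.smul_apply, smul_eq_mul, Pi.zero_apply] at h ⊢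
    linear_combination h
  have hC₁u : C₁ *ᵥ u ≠ 0 := by
    simpa [neg_mulVec] using hC₁neg.mulVec_ne_zero hu
  obtain ⟨t, ha, hd⟩ :=
    exists_eq_smul_of_mul_eq_mul (hC₂pos.mulVec_ne_zero hv) hC₁u hrankOne
  refine ⟨-t, ?_, ?_⟩
  · rw [add_mulVec, ha, smul_mulVec, neg_smul, add_neg_cancel]
  · rw [add_mulVec, hd, smul_mulVec, neg_smul, add_neg_cancel]

/-- A rank-one eigenvector `u ⊗ v` of `M₁(X) + λM₀(X) = 0` yields a solution of the
two-parameter eigenvalue problem. -/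
theorem stmt_3 {n m : ℕ}
    (A₁ B₁ C₁ : Matrix (Fin n) (Fin n) ℝ) (A₂ B₂ C₂ : Matrix (Fin m) (Fin m) ℝ)
    (hA₁ : A₁.IsSymm) (hB₁ : B₁.IsSymm) (hC₁ : C₁.IsSymm)
    (hA₂ : A₂.IsSymm) (hB₂ : B₂.IsSymm) (hC₂ : C₂.IsSymm)
    (hC₁neg : (-C₁).PosDef) (hC₂pos : C₂.PosDef)
    (u : Fin n → ℝ) (v : Fin m → ℝ) (hu : u ≠ 0) (hv : v ≠ 0) (lam : ℝ)
    (w : Fin n × Fin m → ℝ) (hw : w = fun p => u p.1 * v p.2)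
    (heig : (A₁ ⊗ₖ C₂ - C₁ ⊗ₖ A₂).mulVec w
        + lam • (B₁ ⊗ₖ C₂ - C₁ ⊗ₖ B₂).mulVec w = 0) :
    ∃ mu : ℝ, (A₁ + lam • B₁ + mu • C₁).mulVec u = 0 ∧
      (A₂ + lam • B₂ + mu • C₂).mulVec v = 0 :=
  stmt_3_general A₁ B₁ C₁ A₂ B₂ C₂ hC₁neg hC₂pos u v hu hv lam w hw heig
end

section
/- Let A₁, B₁, C₁ be symmetric n×n matrices and A₂, B₂, C₂ symmetric m×m matrices; assume C₂ is positive definite, C₁ is negative definite, and C₁⊗B₂ − B₁⊗C₂ is positive definite. Suppose nonzero vectors u, v simultaneously satisfy (c₂(v)A₁ − a₂(v)C₁)u = λ̂(b₂(v)C₁ − c₂(v)B₁)u and (a₁(u)C₂ − c₁(u)A₂)v = λ̃(c₁(u)B₂ − b₁(u)C₂)v. Then λ̂ = λ̃. -/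
open Matrix Kronecker

private theorem kron_quad {n m : ℕ} (M : Matrix (Fin n) (Fin n) ℝ) (N : Matrix (Fin m) (Fin m) ℝ)
    (u : Fin n → ℝ) (v : Fin m → ℝ) :
    (fun p : Fin n × Fin m => u p.1 * v p.2) ⬝ᵥ (M ⊗ₖ N).mulVec (fun p => u p.1 * v p.2)
      = (u ⬝ᵥ M.mulVec u) * (v ⬝ᵥ N.mulVec v) := by
  simp only [dotProduct, mulVec, kroneckerMap_apply, Fintype.sum_prod_type]
  rw [Finset.sum_mul_sum]
  apply Finset.sum_congr rfl; intro i _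
  apply Finset.sum_congr rfl; intro j _
  rw [mul_mul_mul_comm, Finset.sum_mul_sum]
  congr 1
  apply Finset.sum_congr rfl; intro k _
  apply Finset.sum_congr rfl; intro l _
  ring

/-- If `u`, `v` simultaneously solve the two alternating generalized eigenvalue problems
with eigenvalues `λ̂` and `λ̃`, then the eigenvalues coincide. -/
theorem stmt_5 {n m : ℕ}
    (A₁ B₁ C₁ : Matrix (Fin n) (Fin n) ℝ) (A₂ B₂ C₂ : Matrix (Fin m) (Fin m) ℝ)
    (hA₁ : A₁.IsSymm) (hB₁ : B₁.IsSymm) (hC₁ : C₁.IsSymm)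
    (hA₂ : A₂.IsSymm) (hB₂ : B₂.IsSymm) (hC₂ : C₂.IsSymm)
    (hC₂pos : C₂.PosDef) (hC₁neg : (-C₁).PosDef)
    (hdef : (C₁ ⊗ₖ B₂ - B₁ ⊗ₖ C₂).PosDef)
    (u : Fin n → ℝ) (v : Fin m → ℝ) (hu : u ≠ 0) (hv : v ≠ 0)
    (lamHat lamTilde : ℝ)
    (a₁ : ℝ) (ha₁ : a₁ = u ⬝ᵥ A₁.mulVec u) (b₁ : ℝ) (hb₁ : b₁ = u ⬝ᵥ B₁.mulVec u)
    (c₁ : ℝ) (hc₁ : c₁ = u ⬝ᵥ C₁.mulVec u) (a₂ : ℝ) (ha₂ : a₂ = v ⬝ᵥ A₂.mulVec v)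
    (b₂ : ℝ) (hb₂ : b₂ = v ⬝ᵥ B₂.mulVec v) (c₂ : ℝ) (hc₂ : c₂ = v ⬝ᵥ C₂.mulVec v)
    (h1 : (c₂ • A₁ - a₂ • C₁).mulVec u = lamHat • (b₂ • C₁ - c₂ • B₁).mulVec u)
    (h2 : (a₁ • C₂ - c₁ • A₂).mulVec v = lamTilde • (c₁ • B₂ - b₁ • C₂).mulVec v) :
    lamHat = lamTilde := by
  -- nonzero Kronecker vector
  set w : Fin n × Fin m → ℝ := fun p => u p.1 * v p.2 with hw
  have hwne : w ≠ 0 := by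
    obtain ⟨i, hi⟩ := Function.ne_iff.mp hu
    obtain ⟨j, hj⟩ := Function.ne_iff.mp hv
    intro h
    have := congrFun h (i, j)
    simp [hw] at this
    rcases this with h' | h' <;> simp_all
  have hD : 0 < c₁ * b₂ - b₁ * c₂ := by
    have := hdef.dotProduct_mulVec_pos hwne
    simpa [hw, sub_mulVec, dotProduct_sub, kron_quad, hb₁, hc₁, hb₂, hc₂] using this
  have e1 : c₂ * a₁ - a₂ * c₁ = lamHat * (b₂ * c₁ - c₂ * b₁) := by
    have := congrArg (fun x => u ⬝ᵥ x) h1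
    simpa [sub_mulVec, smul_mulVec, dotProduct_sub, dotProduct_smul, smul_eq_mul,
      ha₁, hb₁, hc₁, mul_sub] using this
  have e2 : a₁ * c₂ - c₁ * a₂ = lamTilde * (c₁ * b₂ - b₁ * c₂) := by
    have := congrArg (fun x => v ⬝ᵥ x) h2
    simpa [sub_mulVec, smul_mulVec, dotProduct_sub, dotProduct_smul, smul_eq_mul,
      ha₂, hb₂, hc₂, mul_sub] using this
  have key : lamHat * (c₁ * b₂ - b₁ * c₂) = lamTilde * (c₁ * b₂ - b₁ * c₂) := by
    nlinarith [e1, e2]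
  exact mul_right_cancel₀ (ne_of_gt hD) key
end

section
/- Under the same assumptions, if nonzero u, v and λ simultaneously satisfy (c₂(v)A₁ − a₂(v)C₁)u = λ(b₂(v)C₁ − c₂(v)B₁)u and (a₁(u)C₂ − c₁(u)A₂)v = λ(c₁(u)B₂ − b₁(u)C₂)v, then setting μ := −(a₂(v) + λb₂(v))/c₂(v), one has (A₁ + λB₁ + μC₁)u = 0 and (A₂ + λB₂ + μC₂)v = 0; moreover μ = −(a₁(u) + λb₁(u))/c₁(u). -/
open Matrix Kronecker

/-!
Clearing the denominator `c₂`, the first alternating equation says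
`c₂ • (A₁ + λB₁ + μC₁) u = 0`, so `u` is an eigenvector of the two-parameter pencil; testing
this against `u` gives `a₁ + λb₁ + μc₁ = 0`, which is the second formula for `μ`. With this
relation the second alternating equation reads `c₁ • (A₂ + λB₂ + μC₂) v = 0`.
-/

section Pencil

variable {ι K : Type*} [Fintype ι] [Field K]

theorem mulVec_add_smul_add_smul_eq_zero {A B C : Matrix ι ι K} {w : ι → K}
    {a b c lam mu : K} (hc : c ≠ 0) (hmu : mu * c = -(a + lam * b))
    (h : (c • A - a • C) *ᵥ w = lam • (b • C - c • B) *ᵥ w) :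
    (A + lam • B + mu • C) *ᵥ w = 0 := by
  simp only [sub_mulVec, add_mulVec, smul_mulVec] at h ⊢
  have hscaled : c • (A *ᵥ w + lam • B *ᵥ w + mu • C *ᵥ w) = 0 := calc
    c • (A *ᵥ w + lam • B *ᵥ w + mu • C *ᵥ w)
        = (c • A *ᵥ w - a • C *ᵥ w) - lam • (b • C *ᵥ w - c • B *ᵥ w)
          + (a + lam * b + mu * c) • C *ᵥ w := by module
    _ = 0 := by rw [h, hmu]; module
  exact (smul_eq_zero.mp hscaled).resolve_left hc

theorem dotProduct_mulVec_add_smul_add_smul {A B C : Matrix ι ι K} (w : ι → K) (lam mu : K) :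
    w ⬝ᵥ (A + lam • B + mu • C) *ᵥ w
      = w ⬝ᵥ A *ᵥ w + lam * w ⬝ᵥ B *ᵥ w + mu * w ⬝ᵥ C *ᵥ w := by
  simp only [add_mulVec, smul_mulVec, dotProduct_add, dotProduct_smul, smul_eq_mul]

end Pencil

theorem stmt_6_general {n m : ℕ}
    (A₁ B₁ C₁ : Matrix (Fin n) (Fin n) ℝ) (A₂ B₂ C₂ : Matrix (Fin m) (Fin m) ℝ)
    (hC₂pos : C₂.PosDef) (hC₁neg : (-C₁).PosDef)
    (u : Fin n → ℝ) (v : Fin m → ℝ) (hu : u ≠ 0) (hv : v ≠ 0) (lam : ℝ)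
    (a₁ : ℝ) (ha₁ : a₁ = u ⬝ᵥ A₁.mulVec u) (b₁ : ℝ) (hb₁ : b₁ = u ⬝ᵥ B₁.mulVec u)
    (c₁ : ℝ) (hc₁ : c₁ = u ⬝ᵥ C₁.mulVec u) (a₂ : ℝ)
    (b₂ : ℝ) (c₂ : ℝ) (hc₂ : c₂ = v ⬝ᵥ C₂.mulVec v)
    (h1 : (c₂ • A₁ - a₂ • C₁).mulVec u = lam • (b₂ • C₁ - c₂ • B₁).mulVec u)
    (h2 : (a₁ • C₂ - c₁ • A₂).mulVec v = lam • (c₁ • B₂ - b₁ • C₂).mulVec v)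
    (mu : ℝ) (hmu : mu = -(a₂ + lam * b₂) / c₂) :
    (A₁ + lam • B₁ + mu • C₁).mulVec u = 0 ∧
      (A₂ + lam • B₂ + mu • C₂).mulVec v = 0 ∧
      mu = -(a₁ + lam * b₁) / c₁ := by
  have hc₂pos : 0 < c₂ := hc₂ ▸ hC₂pos.dotProduct_mulVec_pos hv
  have hc₁neg : c₁ < 0 := by
    have := hC₁neg.dotProduct_mulVec_pos hu
    rw [star_trivial, neg_mulVec, dotProduct_neg] at this
    linarith
  have hu_eigen : (A₁ + lam • B₁ + mu • C₁) *ᵥ u = 0 :=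
    mulVec_add_smul_add_smul_eq_zero hc₂pos.ne' (by rw [hmu]; field_simp) h1
  have hmuc₁ : a₁ + lam * b₁ + mu * c₁ = 0 := by
    have := congrArg (u ⬝ᵥ ·) hu_eigen
    simpa only [dotProduct_mulVec_add_smul_add_smul, dotProduct_zero, ← ha₁, ← hb₁, ← hc₁]
      using this
  have h2_neg : (c₁ • A₂ - a₁ • C₂) *ᵥ v = lam • (b₁ • C₂ - c₁ • B₂) *ᵥ v := by
    rw [← neg_sub, neg_mulVec, h2, ← neg_sub (b₁ • C₂), neg_mulVec, smul_neg, neg_neg]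
  refine ⟨hu_eigen, mulVec_add_smul_add_smul_eq_zero hc₁neg.ne (by linarith) h2_neg, ?_⟩
  rw [eq_div_iff hc₁neg.ne]
  linarith

/-- Fixed-point lemma: a simultaneous solution of the alternating eigenvalue problems with
common eigenvalue `λ` solves the two-parameter problem with `μ = −(a₂ + λb₂)/c₂`,
and moreover `μ = −(a₁ + λb₁)/c₁`. -/
theorem stmt_6 {n m : ℕ}
    (A₁ B₁ C₁ : Matrix (Fin n) (Fin n) ℝ) (A₂ B₂ C₂ : Matrix (Fin m) (Fin m) ℝ)
    (hA₁ : A₁.IsSymm) (hB₁ : B₁.IsSymm) (hC₁ : C₁.IsSymm)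
    (hA₂ : A₂.IsSymm) (hB₂ : B₂.IsSymm) (hC₂ : C₂.IsSymm)
    (hC₂pos : C₂.PosDef) (hC₁neg : (-C₁).PosDef)
    (hdef : (C₁ ⊗ₖ B₂ - B₁ ⊗ₖ C₂).PosDef)
    (u : Fin n → ℝ) (v : Fin m → ℝ) (hu : u ≠ 0) (hv : v ≠ 0) (lam : ℝ)
    (a₁ : ℝ) (ha₁ : a₁ = u ⬝ᵥ A₁.mulVec u) (b₁ : ℝ) (hb₁ : b₁ = u ⬝ᵥ B₁.mulVec u)
    (c₁ : ℝ) (hc₁ : c₁ = u ⬝ᵥ C₁.mulVec u) (a₂ : ℝ) (ha₂ : a₂ = v ⬝ᵥ A₂.mulVec v)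
    (b₂ : ℝ) (hb₂ : b₂ = v ⬝ᵥ B₂.mulVec v) (c₂ : ℝ) (hc₂ : c₂ = v ⬝ᵥ C₂.mulVec v)
    (h1 : (c₂ • A₁ - a₂ • C₁).mulVec u = lam • (b₂ • C₁ - c₂ • B₁).mulVec u)
    (h2 : (a₁ • C₂ - c₁ • A₂).mulVec v = lam • (c₁ • B₂ - b₁ • C₂).mulVec v)
    (mu : ℝ) (hmu : mu = -(a₂ + lam * b₂) / c₂) :
    (A₁ + lam • B₁ + mu • C₁).mulVec u = 0 ∧
      (A₂ + lam • B₂ + mu • C₂).mulVec v = 0 ∧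
      mu = -(a₁ + lam * b₁) / c₁ :=
  stmt_6_general A₁ B₁ C₁ A₂ B₂ C₂ hC₂pos hC₁neg u v hu hv lam a₁ ha₁ b₁ hb₁ c₁ hc₁ a₂ b₂ c₂ hc₂ h1
    h2 mu hmu
end

section
/- Let A₁, B₁, C₁ and A₂, B₂, C₂ be symmetric matrices with C₂ positive definite, C₁ negative definite, and C₁⊗B₂ − B₁⊗C₂ positive definite; further assume B₁ is negative definite. Let u₀ minimize the Rayleigh quotient u ↦ (uᵀC₁u)/(uᵀB₁u) over nonzero u, let t = (u₀ᵀC₁u₀)/(u₀ᵀB₁u₀), and for sufficiently small ε > 0 define C₁' = C₁ − (t−ε)B₁ and C₂' = C₂ − (t−ε)B₂. Then C₁' is negative definite and C₂' is positive definite. -/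
/-!
Since `B₁` is negative definite, `t ≤ uᵀC₁u / uᵀB₁u` rearranges to `uᵀC₁u ≤ t · uᵀB₁u`, so
`-(C₁ - sB₁)` is positive definite for every `s < t`. Testing the positive definite matrix
`C₁ ⊗ B₂ - B₁ ⊗ C₂` on `u₀ ⊗ v`, where `u₀ᵀC₁u₀ = t · u₀ᵀB₁u₀`, gives
`(u₀ᵀB₁u₀) · vᵀ(tB₂ - C₂)v > 0`, hence `C₂ - tB₂` is positive definite. Positive definiteness
survives small perturbations, as seen by comparing both quadratic forms on the (compact) unit
sphere, so `C₂ - (t - ε)B₂ = (C₂ - tB₂) + εB₂` is positive definite for small `ε`.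
-/

open Matrix Kronecker

namespace Matrix

variable {ι κ : Type*} [Fintype ι] [Fintype κ]

lemma dotProduct_kronecker_mulVec {R : Type*} [CommSemiring R] (A : Matrix ι ι R)
    (B : Matrix κ κ R) (u u' : ι → R) (v v' : κ → R) :
    (fun p : ι × κ => u p.1 * v p.2) ⬝ᵥ (A ⊗ₖ B) *ᵥ (fun p : ι × κ => u' p.1 * v' p.2)
      = (u ⬝ᵥ A *ᵥ u') * (v ⬝ᵥ B *ᵥ v') := by
  have hmulVec : ∀ p : ι × κ,
      ((A ⊗ₖ B) *ᵥ fun p : ι × κ => u' p.1 * v' p.2) p = (A *ᵥ u') p.1 * (B *ᵥ v') p.2 := by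
    intro p
    simp only [mulVec, dotProduct, kroneckerMap_apply, Fintype.sum_prod_type, Finset.sum_mul_sum]
    exact Finset.sum_congr rfl fun k _ => Finset.sum_congr rfl fun l _ => by ring
  simp only [dotProduct, hmulVec, Fintype.sum_prod_type, Finset.sum_mul_sum]
  exact Finset.sum_congr rfl fun i _ => Finset.sum_congr rfl fun j _ => by ring

lemma continuous_dotProduct_mulVec_self (M : Matrix ι ι ℝ) :
    Continuous fun v : ι → ℝ => v ⬝ᵥ M *ᵥ v := by
  fun_prop

lemma dotProduct_mulVec_eq_norm_sq_mul (M : Matrix ι ι ℝ) {v : ι → ℝ} (hv : v ≠ 0) :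
    v ⬝ᵥ M *ᵥ v = ‖v‖ ^ 2 * ((‖v‖⁻¹ • v) ⬝ᵥ M *ᵥ (‖v‖⁻¹ • v)) := by
  have hv' : ‖v‖ ≠ 0 := norm_ne_zero_iff.mpr hv
  simp only [mulVec_smul, smul_dotProduct, dotProduct_smul, smul_eq_mul]
  field_simp

lemma dotProduct_mulVec_lt_zero_of_posDef_neg {B : Matrix ι ι ℝ} (hB : (-B).PosDef)
    {u : ι → ℝ} (hu : u ≠ 0) : u ⬝ᵥ B *ᵥ u < 0 := by
  simpa [neg_mulVec] using hB.dotProduct_mulVec_pos hu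

theorem PosDef.exists_add_smul_posDef {M : Matrix ι ι ℝ} (hM : M.PosDef) {N : Matrix ι ι ℝ}
    (hN : N.IsHermitian) : ∃ ε₀ > 0, ∀ ε : ℝ, |ε| ≤ ε₀ → (M + ε • N).PosDef := by
  have hS := isCompact_sphere (0 : ι → ℝ) 1
  obtain ⟨L, hL0, hL⟩ := hS.exists_forall_le' (continuous_dotProduct_mulVec_self M).continuousOn
    (a := 0) fun w hw => by
      simpa using hM.dotProduct_mulVec_pos (Metric.ne_of_mem_sphere hw one_ne_zero)
  obtain ⟨K, hK⟩ := hS.exists_bound_of_continuousOn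
    (continuous_dotProduct_mulVec_self N).continuousOn
  refine ⟨L / (|K| + 1), by positivity, fun ε hε => ?_⟩
  refine .of_dotProduct_mulVec_pos (hM.isHermitian.add (hN.smul (IsSelfAdjoint.all ε)))
    fun v hv => ?_
  set w := ‖v‖⁻¹ • v
  have hw : w ∈ Metric.sphere (0 : ι → ℝ) 1 := by
    simp [w, norm_smul, norm_ne_zero_iff.mpr hv]
  rw [star_trivial, dotProduct_mulVec_eq_norm_sq_mul _ hv]
  refine mul_pos (by positivity) ?_
  rw [add_mulVec, smul_mulVec, dotProduct_add, dotProduct_smul, smul_eq_mul]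
  have hperturb : |ε * (w ⬝ᵥ N *ᵥ w)| ≤ L / (|K| + 1) * |K| := by
    rw [abs_mul]
    exact mul_le_mul hε ((hK w hw).trans (le_abs_self K)) (abs_nonneg _) (by positivity)
  have hsmall : L / (|K| + 1) * |K| < L := by
    rw [div_mul_eq_mul_div, div_lt_iff₀ (by positivity)]
    nlinarith [abs_nonneg K]
  linarith [hL w hw, neg_abs_le (ε * (w ⬝ᵥ N *ᵥ w))]

theorem posDef_neg_sub_smul_of_le_div {B C : Matrix ι ι ℝ} (hB : (-B).PosDef)
    (hC : C.IsHermitian) {t s : ℝ}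
    (hmin : ∀ u : ι → ℝ, u ≠ 0 → t ≤ (u ⬝ᵥ C *ᵥ u) / (u ⬝ᵥ B *ᵥ u)) (hs : s < t) :
    (-(C - s • B)).PosDef := by
  have hB' : B.IsHermitian := by simpa using hB.isHermitian.neg
  refine .of_dotProduct_mulVec_pos (hC.sub (hB'.smul (IsSelfAdjoint.all s))).neg fun u hu => ?_
  have hBu := dotProduct_mulVec_lt_zero_of_posDef_neg hB hu
  have hCu := (le_div_iff_of_neg hBu).mp (hmin u hu)
  simp only [star_trivial, neg_mulVec, sub_mulVec, smul_mulVec, dotProduct_neg, dotProduct_sub,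
    dotProduct_smul, smul_eq_mul]
  nlinarith

theorem posDef_sub_smul_of_posDef_kronecker_sub {B₁ C₁ : Matrix ι ι ℝ} {B₂ C₂ : Matrix κ κ ℝ}
    (hK : (C₁ ⊗ₖ B₂ - B₁ ⊗ₖ C₂).PosDef) (hB₂ : B₂.IsHermitian) (hC₂ : C₂.IsHermitian)
    {u : ι → ℝ} (hu : u ≠ 0) (hB₁u : u ⬝ᵥ B₁ *ᵥ u < 0) {t : ℝ}
    (hC₁u : u ⬝ᵥ C₁ *ᵥ u = t * (u ⬝ᵥ B₁ *ᵥ u)) : (C₂ - t • B₂).PosDef := by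
  refine .of_dotProduct_mulVec_pos (hC₂.sub (hB₂.smul (IsSelfAdjoint.all t))) fun v hv => ?_
  have huv : (fun p : ι × κ => u p.1 * v p.2) ≠ 0 := by
    obtain ⟨i, hi⟩ := Function.ne_iff.mp hu
    obtain ⟨j, hj⟩ := Function.ne_iff.mp hv
    exact Function.ne_iff.mpr ⟨(i, j), mul_ne_zero hi hj⟩
  have h := hK.dotProduct_mulVec_pos huv
  simp only [star_trivial, sub_mulVec, dotProduct_sub, dotProduct_kronecker_mulVec, hC₁u] at h
  have hv' : 0 < v ⬝ᵥ C₂ *ᵥ v - t * (v ⬝ᵥ B₂ *ᵥ v) := by nlinarith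
  simpa [sub_mulVec, smul_mulVec] using hv'

end Matrix

theorem stmt_8_general {n m : ℕ}
    (B₁ C₁ : Matrix (Fin n) (Fin n) ℝ) (B₂ C₂ : Matrix (Fin m) (Fin m) ℝ)
    (hC₁ : C₁.IsSymm)
    (hB₂ : B₂.IsSymm) (hC₂ : C₂.IsSymm)
    (hdef : (C₁ ⊗ₖ B₂ - B₁ ⊗ₖ C₂).PosDef)
    (hB₁neg : (-B₁).PosDef)
    (u₀ : Fin n → ℝ) (hu₀ : u₀ ≠ 0)
    (t : ℝ) (ht : t = (u₀ ⬝ᵥ C₁.mulVec u₀) / (u₀ ⬝ᵥ B₁.mulVec u₀))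
    (hmin : ∀ u : Fin n → ℝ, u ≠ 0 →
      t ≤ (u ⬝ᵥ C₁.mulVec u) / (u ⬝ᵥ B₁.mulVec u)) :
    ∃ ε₀ > 0, ∀ ε : ℝ, 0 < ε → ε ≤ ε₀ →
      (-(C₁ - (t - ε) • B₁)).PosDef ∧ (C₂ - (t - ε) • B₂).PosDef := by
  have hB₁u₀ := dotProduct_mulVec_lt_zero_of_posDef_neg hB₁neg hu₀
  have hC₁u₀ : u₀ ⬝ᵥ C₁ *ᵥ u₀ = t * (u₀ ⬝ᵥ B₁ *ᵥ u₀) := by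
    rw [ht, div_mul_cancel₀ _ hB₁u₀.ne]
  have hB₂' : B₂.IsHermitian := isHermitian_iff_isSymm.mpr hB₂
  have hC₂t := posDef_sub_smul_of_posDef_kronecker_sub hdef hB₂' (isHermitian_iff_isSymm.mpr hC₂)
    hu₀ hB₁u₀ hC₁u₀
  obtain ⟨ε₀, hε₀, hperturb⟩ := hC₂t.exists_add_smul_posDef hB₂'
  refine ⟨ε₀, hε₀, fun ε hε hεε₀ => ⟨?_, ?_⟩⟩
  · exact posDef_neg_sub_smul_of_le_div hB₁neg (isHermitian_iff_isSymm.mpr hC₁) hmin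
      (by linarith)
  · rw [sub_smul, ← sub_add]
    exact hperturb ε (abs_le.mpr ⟨by linarith, hεε₀⟩)

/-- Affine-transformation normalization: if `u₀` minimizes `(uᵀC₁u)/(uᵀB₁u)` with value
`t`, then for all sufficiently small `ε > 0` the matrices `C₁ − (t−ε)B₁` and
`C₂ − (t−ε)B₂` are negative and positive definite respectively. -/
theorem stmt_8 {n m : ℕ}
    (A₁ B₁ C₁ : Matrix (Fin n) (Fin n) ℝ) (A₂ B₂ C₂ : Matrix (Fin m) (Fin m) ℝ)
    (hA₁ : A₁.IsSymm) (hB₁ : B₁.IsSymm) (hC₁ : C₁.IsSymm)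
    (hA₂ : A₂.IsSymm) (hB₂ : B₂.IsSymm) (hC₂ : C₂.IsSymm)
    (hC₂pos : C₂.PosDef) (hC₁neg : (-C₁).PosDef)
    (hdef : (C₁ ⊗ₖ B₂ - B₁ ⊗ₖ C₂).PosDef)
    (hB₁neg : (-B₁).PosDef)
    (u₀ : Fin n → ℝ) (hu₀ : u₀ ≠ 0)
    (t : ℝ) (ht : t = (u₀ ⬝ᵥ C₁.mulVec u₀) / (u₀ ⬝ᵥ B₁.mulVec u₀))
    (hmin : ∀ u : Fin n → ℝ, u ≠ 0 →
      t ≤ (u ⬝ᵥ C₁.mulVec u) / (u ⬝ᵥ B₁.mulVec u)) :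
    ∃ ε₀ > 0, ∀ ε : ℝ, 0 < ε → ε ≤ ε₀ →
      (-(C₁ - (t - ε) • B₁)).PosDef ∧ (C₂ - (t - ε) • B₂).PosDef :=
  stmt_8_general B₁ C₁ B₂ C₂ hC₁ hB₂ hC₂ hdef hB₁neg u₀ hu₀ t ht hmin
end

section
/- Let D ⊂ ℝⁿ be open, f : D → ℝ continuously differentiable, K ⊂ D compact, and let xₖ ∈ K be a sequence with gₖ = ∇f(xₖ) satisfying f(x_{k+1}) ≤ f(xₖ − σgₖ) for every σ ∈ ℝ with xₖ − σgₖ ∈ D. Then gₖ → 0 as k → ∞. -/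
/-!
Along the steepest-descent ray from `x` the slope of `f` is `-⟪∇f(y), ∇f(x)⟫`, and while `∇f(y)`
stays within `η` of `∇f(x)` this is at most `-‖∇f(x)‖ (‖∇f(x)‖ - η)`. Uniform continuity of `∇f`
on a compact neighbourhood of `K` inside `D` therefore yields, for every `ε > 0`, one radius `ρ`
such that a gradient step of length `ρ` from any point of `K` with `‖∇f‖ ≥ ε` decreases `f` by
at least `ρ ε / 2`. The values `f(xₖ)` are nonincreasing and bounded below on `K`, so their
consecutive decrements tend to zero, which forces `‖gₖ‖ < ε` eventually.
-/

open Filter Metric Set Topology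
open scoped InnerProductSpace

section Gradient

variable {E : Type*} [NormedAddCommGroup E] [InnerProductSpace ℝ E]

theorem norm_mul_sub_le_inner_of_norm_sub_le {u v : E} {η : ℝ} (h : ‖u - v‖ ≤ η) :
    ‖v‖ * (‖v‖ - η) ≤ ⟪u, v⟫_ℝ := by
  have hcs : -(‖u - v‖ * ‖v‖) ≤ ⟪u - v, v⟫_ℝ := neg_le_of_abs_le (abs_real_inner_le_norm _ _)
  have hsplit : ⟪u, v⟫_ℝ = ‖v‖ ^ 2 + ⟪u - v, v⟫_ℝ := by
    rw [inner_sub_left, real_inner_self_eq_norm_sq]; ring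
  nlinarith [norm_nonneg v]

theorem add_mul_le_of_le_inner_gradient [CompleteSpace E] {f : E → ℝ} {x v : E} {a σ : ℝ}
    (hσ : 0 ≤ σ) (hf : ∀ t ∈ Icc 0 σ, DifferentiableAt ℝ f (x - t • v))
    (ha : ∀ t ∈ Icc 0 σ, a ≤ ⟪gradient f (x - t • v), v⟫_ℝ) :
    f (x - σ • v) + a * σ ≤ f x := by
  set φ : ℝ → ℝ := fun t => f (x - t • v) + a * t
  have hφ : ∀ t ∈ Icc 0 σ, HasDerivAt φ (-⟪gradient f (x - t • v), v⟫_ℝ + a) t := by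
    intro t ht
    have hline : HasDerivAt (fun s : ℝ => x - s • v) (-v) t := by
      simpa using ((hasDerivAt_id t).smul_const v).const_sub x
    have hcomp := (hf t ht).hasFDerivAt.comp_hasDerivAt t hline
    rw [map_neg, ← inner_gradient_left] at hcomp
    exact (hcomp.add ((hasDerivAt_id t).const_mul a)).congr_deriv (by simp)
  have hanti : AntitoneOn φ (Icc 0 σ) := by
    refine antitoneOn_of_hasDerivWithinAt_nonpos (convex_Icc 0 σ)
      (fun t ht => (hφ t ht).continuousAt.continuousWithinAt)
      (fun t ht => (hφ t (interior_subset ht)).hasDerivWithinAt) fun t ht => ?_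
    linarith [ha t (interior_subset ht)]
  simpa [φ] using hanti ⟨le_rfl, hσ⟩ ⟨hσ, le_rfl⟩ hσ

theorem add_mul_le_of_gradient_step [CompleteSpace E] {f : E → ℝ} {x : E} {σ ρ η : ℝ}
    (hσ : 0 ≤ σ) (hσρ : σ * ‖gradient f x‖ ≤ ρ)
    (hf : ∀ y ∈ closedBall x ρ, DifferentiableAt ℝ f y)
    (hη : ∀ y ∈ closedBall x ρ, ‖gradient f y - gradient f x‖ ≤ η) :
    f (x - σ • gradient f x) + ‖gradient f x‖ * (‖gradient f x‖ - η) * σ ≤ f x := by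
  have hball : ∀ t ∈ Icc 0 σ, x - t • gradient f x ∈ closedBall x ρ := fun t ht => by
    rw [mem_closedBall, dist_self_sub_left, norm_smul,
      Real.norm_of_nonneg ht.1]
    exact (mul_le_mul_of_nonneg_right ht.2 (norm_nonneg _)).trans hσρ
  exact add_mul_le_of_le_inner_gradient hσ (fun t ht => hf _ (hball t ht))
    fun t ht => norm_mul_sub_le_inner_of_norm_sub_le (hη _ (hball t ht))

theorem ContDiffOn.continuousOn_gradient [CompleteSpace E] {f : E → ℝ} {D : Set E}
    (hf : ContDiffOn ℝ 1 f D) (hD : IsOpen D) : ContinuousOn (gradient f) D :=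
  (InnerProductSpace.toDual ℝ E).symm.continuous.comp_continuousOn
    (hf.continuousOn_fderiv_of_isOpen hD le_rfl)

theorem IsCompact.exists_gradient_step_decrease [ProperSpace E] {D K : Set E} {f : E → ℝ}
    (hK : IsCompact K) (hD : IsOpen D) (hKD : K ⊆ D) (hf : ContDiffOn ℝ 1 f D) {ε : ℝ}
    (hε : 0 < ε) :
    ∃ c > 0, ∀ x ∈ K, ε ≤ ‖gradient f x‖ →
      ∃ σ : ℝ, x - σ • gradient f x ∈ D ∧ f (x - σ • gradient f x) + c ≤ f x := by
  obtain ⟨r, hr, hrD⟩ := hK.exists_cthickening_subset_open hD hKD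
  have hUC : UniformContinuousOn (gradient f) (cthickening r K) :=
    hK.cthickening.uniformContinuousOn_of_continuous ((hf.continuousOn_gradient hD).mono hrD)
  obtain ⟨δ, hδ, hδUC⟩ := uniformContinuousOn_iff_le.mp hUC (ε / 2) (half_pos hε)
  set ρ := min δ r
  have hρ : 0 < ρ := lt_min hδ hr
  refine ⟨ρ * (ε / 2), mul_pos hρ (half_pos hε), fun x hx hεx => ?_⟩
  have hgx : 0 < ‖gradient f x‖ := hε.trans_le hεx
  have hball : closedBall x ρ ⊆ cthickening r K :=
    (closedBall_subset_cthickening hx ρ).trans (cthickening_mono (min_le_right δ r) K)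
  have hxball : x - (ρ / ‖gradient f x‖) • gradient f x ∈ closedBall x ρ := by
    rw [mem_closedBall, dist_self_sub_left, norm_smul,
      Real.norm_of_nonneg (by positivity), div_mul_cancel₀ _ hgx.ne']
  refine ⟨ρ / ‖gradient f x‖, hrD (hball hxball), ?_⟩
  have hstep := add_mul_le_of_gradient_step (ρ := ρ) (η := ε / 2) (by positivity)
    (div_mul_cancel₀ _ hgx.ne').le
    (fun y hy => (hf.contDiffAt (hD.mem_nhds (hrD (hball hy)))).differentiableAt one_ne_zero)
    fun y hy => by
      rw [← dist_eq_norm]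
      exact hδUC _ (hball hy) _ (self_subset_cthickening K hx)
        ((mem_closedBall.mp hy).trans (min_le_left δ r))
  have hdecr : ‖gradient f x‖ * (‖gradient f x‖ - ε / 2) * (ρ / ‖gradient f x‖)
      = ρ * (‖gradient f x‖ - ε / 2) := by
    field_simp
  rw [hdecr] at hstep
  have hερ : ρ * (ε / 2) ≤ ρ * (‖gradient f x‖ - ε / 2) := by gcongr; linarith
  linarith

end Gradient

theorem Antitone.tendsto_sub_succ_zero {u : ℕ → ℝ} (hu : Antitone u) (hbdd : BddBelow (range u)) :
    Tendsto (fun k => u k - u (k + 1)) atTop (𝓝 0) := by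
  have hlim := tendsto_atTop_ciInf hu hbdd
  simpa using hlim.sub (hlim.comp (tendsto_add_atTop_nat 1))

/-- Line-search convergence lemma: if each iterate decreases `f` at least as much as the
best gradient step, the gradients converge to zero. -/
theorem stmt_12 {n : ℕ} (D : Set (EuclideanSpace ℝ (Fin n))) (hD : IsOpen D)
    (f : EuclideanSpace ℝ (Fin n) → ℝ) (hf : ContDiffOn ℝ 1 f D)
    (K : Set (EuclideanSpace ℝ (Fin n))) (hK : IsCompact K) (hKD : K ⊆ D)
    (x : ℕ → EuclideanSpace ℝ (Fin n)) (hx : ∀ k, x k ∈ K)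
    (g : ℕ → EuclideanSpace ℝ (Fin n)) (hg : ∀ k, g k = gradient f (x k))
    (hstep : ∀ k, ∀ σ : ℝ, x k - σ • g k ∈ D → f (x (k + 1)) ≤ f (x k - σ • g k)) :
    Tendsto g atTop (nhds 0) := by
  obtain rfl : g = fun k => gradient f (x k) := funext hg
  have hanti : Antitone fun k => f (x k) :=
    antitone_nat_of_succ_le fun k => by simpa using hstep k 0 (by simpa using hKD (hx k))
  have hbdd : BddBelow (range fun k => f (x k)) :=
    ((hK.image_of_continuousOn (hf.continuousOn.mono hKD)).bddBelow).mono
      (range_subset_iff.mpr fun k => mem_image_of_mem f (hx k))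
  refine NormedAddGroup.tendsto_nhds_zero.mpr fun ε hε => ?_
  obtain ⟨c, hc, hdecrease⟩ := hK.exists_gradient_step_decrease hD hKD hf hε
  filter_upwards [(hanti.tendsto_sub_succ_zero hbdd).eventually (eventually_lt_nhds hc)]
    with k hk
  by_contra! hεk
  obtain ⟨σ, hσD, hσ⟩ := hdecrease (x k) (hx k) hεk
  linarith [hstep k σ hσD]
end

section
/- Let U ⊂ ℝ be open, f, g : U → ℝ differentiable with f' and g' Lipschitz continuous with constants α and β respectively, and assume |f'(x) − g'(x)| ≥ γ > 0 for all x ∈ U. Suppose a sequence xₖ ⊂ U satisfies f(xₖ) + f'(xₖ)(x_{k+1} − xₖ) = g(x_{k+1}) and g(x_{k+1}) + g'(x_{k+1})(x_{k+2} − x_{k+1}) = f(x_{k+2}) for all k. Then with Δxₖ = x_{k+1} − xₖ, the inequalities |Δxₖ|·(1 − (β/2)|Δxₖ|) ≤ (α/(2γ))|Δx_{k−1}|² and |Δx_{k+1}|·(1 − (α/2)|Δx_{k+1}|) ≤ (β/(2γ))|Δxₖ|² hold (assuming the relevant segments lie in U). -/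
/-!
Put `h = f - g`. The two tangent conditions at `x m` say
`h (x m) + h' (x m) * Δ m = -h (x (m + 1))`; by the mean value theorem
`h (x (m + 1)) - h (x m) = h' ξ * Δ m`, and by Darboux's theorem `h'` keeps its sign on the
segment, so `|h' (x m) + h' ξ| ≥ 2γ` and hence `γ |Δ m| ≤ |h (x m)|`. On the other hand
`h (x m)` is, up to sign, the first-order Taylor remainder of `f` (or of `g`) at `x (m - 1)`,
which the Lipschitz bound on the derivative controls by `α/2 Δ(m-1)²` (or `β/2 Δ(m-1)²`).
-/

open Set MeasureTheory
open scoped Interval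

theorem abs_sub_sub_deriv_mul_le_of_lipschitz_deriv {f f' : ℝ → ℝ} {a b c : ℝ}
    (hf : ∀ t ∈ uIcc a b, HasDerivAt f (f' t) t)
    (hLip : ∀ s ∈ uIcc a b, ∀ t ∈ uIcc a b, |f' s - f' t| ≤ c * |s - t|) :
    |f b - f a - f' a * (b - a)| ≤ c / 2 * (b - a) ^ 2 := by
  have hcont : ContinuousOn f' (uIcc a b) :=
    (LipschitzOnWith.of_dist_le' fun s hs t ht => by
      simpa only [Real.dist_eq] using hLip s hs t ht).continuousOn
  have hrem : f b - f a - f' a * (b - a) = ∫ t in a..b, (f' t - f' a) := by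
    rw [intervalIntegral.integral_sub hcont.intervalIntegrable intervalIntegrable_const,
      intervalIntegral.integral_eq_sub_of_hasDerivAt hf hcont.intervalIntegrable,
      intervalIntegral.integral_const, smul_eq_mul, mul_comm]
  calc |f b - f a - f' a * (b - a)|
      ≤ ∫ t in Ι a b, |f' t - f' a| := by
        rw [hrem]
        exact intervalIntegral.norm_integral_le_integral_norm_uIoc (f := fun t => f' t - f' a)
    _ ≤ ∫ t in Ι a b, c * |t - a| ^ 1 := by
        refine setIntegral_mono_on
          (intervalIntegrable_iff.1 (hcont.sub continuousOn_const).abs.intervalIntegrable)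
          (intervalIntegrable_iff.1 <|
            (by fun_prop : Continuous fun t => c * |t - a| ^ 1).intervalIntegrable a b)
          measurableSet_uIoc fun t ht => ?_
        simpa using hLip t (uIoc_subset_uIcc ht) a left_mem_uIcc
    _ = c / 2 * (b - a) ^ 2 := by
        rw [integral_const_mul, integral_pow_abs_sub_uIoc, sq_abs]
        ring

theorem exists_mem_uIcc_sub_eq_deriv_mul {h h' : ℝ → ℝ} {a b : ℝ}
    (hh : ∀ t ∈ uIcc a b, HasDerivAt h (h' t) t) :
    ∃ ξ ∈ uIcc a b, h b - h a = h' ξ * (b - a) := by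
  wlog hab : a < b generalizing a b
  · rcases (not_lt.1 hab).eq_or_lt with rfl | hba
    · exact ⟨_, left_mem_uIcc, by ring⟩
    · obtain ⟨ξ, hξ, hmvt⟩ := this (uIcc_comm a b ▸ hh) hba
      exact ⟨ξ, uIcc_comm a b ▸ hξ, by linear_combination -hmvt⟩
  rw [uIcc_of_le hab.le] at hh ⊢
  obtain ⟨ξ, hξ, hslope⟩ := exists_hasDerivAt_eq_slope h h' hab
    (fun t ht => (hh t ht).continuousAt.continuousWithinAt)
    (fun t ht => hh t (Ioo_subset_Icc_self ht))
  refine ⟨ξ, Ioo_subset_Icc_self hξ, ?_⟩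
  rw [hslope, div_mul_cancel₀ _ (sub_ne_zero.2 hab.ne')]

theorem two_mul_le_abs_deriv_add_of_le_abs_deriv {h h' : ℝ → ℝ} {s : Set ℝ}
    (hs : Convex ℝ s) (hh : ∀ t ∈ s, HasDerivAt h (h' t) t) {γ : ℝ} (hγ : 0 < γ)
    (hgap : ∀ t ∈ s, γ ≤ |h' t|)
    {u v : ℝ} (hu : u ∈ s) (hv : v ∈ s) : 2 * γ ≤ |h' u + h' v| := by
  have hne : ∀ t ∈ s, h' t ≠ 0 := fun t ht h0 => by
    have := hgap t ht
    rw [h0, abs_zero] at this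
    linarith
  have hgu := hgap u hu
  have hgv := hgap v hv
  rcases hasDerivWithinAt_forall_lt_or_forall_gt_of_forall_ne hs
    (fun t ht => (hh t ht).hasDerivWithinAt) hne with hneg | hpos
  · rw [abs_of_neg (hneg u hu), ← neg_le_neg_iff] at hgu
    rw [abs_of_neg (hneg v hv)] at hgv
    rw [abs_of_neg (add_neg (hneg u hu) (hneg v hv))]
    linarith
  · rw [abs_of_pos (hpos u hu)] at hgu
    rw [abs_of_pos (hpos v hv)] at hgv
    rw [abs_of_pos (add_pos (hpos u hu) (hpos v hv))]
    linarith

theorem mul_abs_sub_le_abs_of_tangent_eq_neg {h h' : ℝ → ℝ} {a b γ : ℝ} (hγ : 0 < γ)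
    (hh : ∀ t ∈ uIcc a b, HasDerivAt h (h' t) t) (hgap : ∀ t ∈ uIcc a b, γ ≤ |h' t|)
    (htan : h a + h' a * (b - a) = -h b) : γ * |b - a| ≤ |h a| := by
  obtain ⟨ξ, hξ, hmvt⟩ := exists_mem_uIcc_sub_eq_deriv_mul hh
  have hsum :=
    two_mul_le_abs_deriv_add_of_le_abs_deriv (convex_uIcc a b) hh hγ hgap left_mem_uIcc hξ
  have hmid : 2 * |h a| = |h' a + h' ξ| * |b - a| := by
    rw [← abs_two, ← abs_mul, ← abs_mul, ← abs_neg]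
    congr 1
    linear_combination -htan + hmvt
  nlinarith [abs_nonneg (b - a)]

theorem abs_mul_one_sub_le_of_mul_abs_le {d e c β γ : ℝ} (hγ : 0 < γ) (hβ : 0 ≤ β * |d|)
    (h : γ * |d| ≤ c / 2 * e ^ 2) : |d| * (1 - β / 2 * |d|) ≤ c / (2 * γ) * |e| ^ 2 := by
  rw [sq_abs, show c / (2 * γ) * e ^ 2 = c / 2 * e ^ 2 / γ by ring, le_div_iff₀ hγ]
  nlinarith [mul_nonneg (mul_nonneg hγ.le hβ) (abs_nonneg d)]

theorem stmt_13_general (U : Set ℝ)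
    (f g : ℝ → ℝ) (f' g' : ℝ → ℝ)
    (hf : ∀ x ∈ U, HasDerivAt f (f' x) x) (hg : ∀ x ∈ U, HasDerivAt g (g' x) x)
    (α β γ : ℝ) (hγ : 0 < γ)
    (hfLip : ∀ x ∈ U, ∀ y ∈ U, |f' x - f' y| ≤ α * |x - y|)
    (hgLip : ∀ x ∈ U, ∀ y ∈ U, |g' x - g' y| ≤ β * |x - y|)
    (hgap : ∀ x ∈ U, γ ≤ |f' x - g' x|)
    (x : ℕ → ℝ) (hxU : ∀ k, x k ∈ U)
    (hseg : ∀ k, Set.uIcc (x k) (x (k + 1)) ⊆ U)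
    (hit1 : ∀ k, f (x k) + f' (x k) * (x (k + 1) - x k) = g (x (k + 1)))
    (hit2 : ∀ k, g (x (k + 1)) + g' (x (k + 1)) * (x (k + 2) - x (k + 1)) = f (x (k + 2)))
    (Δ : ℕ → ℝ) (hΔ : ∀ k, Δ k = x (k + 1) - x k) :
    ∀ k : ℕ, 1 ≤ k →
      |Δ k| * (1 - β / 2 * |Δ k|) ≤ α / (2 * γ) * |Δ (k - 1)| ^ 2 ∧
      |Δ (k + 1)| * (1 - α / 2 * |Δ (k + 1)|) ≤ β / (2 * γ) * |Δ k| ^ 2 := by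
  have hgap_le : ∀ m, γ * |Δ (m + 1)| ≤ |f (x (m + 1)) - g (x (m + 1))| := fun m => by
    rw [hΔ]
    refine mul_abs_sub_le_abs_of_tangent_eq_neg hγ
      (fun t ht => (hf t (hseg _ ht)).sub (hg t (hseg _ ht))) (fun t ht => hgap t (hseg _ ht)) ?_
    simp only [Pi.sub_apply]
    linear_combination hit1 (m + 1) - hit2 m
  have hf_taylor : ∀ m, |f (x (m + 1)) - g (x (m + 1))| ≤ α / 2 * Δ m ^ 2 := fun m => by
    rw [hΔ, ← hit1 m, ← sub_sub]
    exact abs_sub_sub_deriv_mul_le_of_lipschitz_deriv (fun t ht => hf t (hseg m ht))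
      fun s hs t ht => hfLip s (hseg m hs) t (hseg m ht)
  have hg_taylor : ∀ m, |f (x (m + 2)) - g (x (m + 2))| ≤ β / 2 * Δ (m + 1) ^ 2 := fun m => by
    rw [hΔ, ← hit2 m, abs_sub_comm, ← sub_sub]
    exact abs_sub_sub_deriv_mul_le_of_lipschitz_deriv (fun t ht => hg t (hseg _ ht))
      fun s hs t ht => hgLip s (hseg _ hs) t (hseg _ ht)
  have hα : ∀ m, 0 ≤ α * |Δ m| := fun m => by
    rw [hΔ]; exact (abs_nonneg _).trans (hfLip _ (hxU _) _ (hxU _))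
  have hβ : ∀ m, 0 ≤ β * |Δ m| := fun m => by
    rw [hΔ]; exact (abs_nonneg _).trans (hgLip _ (hxU _) _ (hxU _))
  rintro k hk
  obtain ⟨j, rfl⟩ := Nat.exists_eq_add_of_le' hk
  exact ⟨abs_mul_one_sub_le_of_mul_abs_le hγ (hβ _) ((hgap_le j).trans (hf_taylor j)),
    abs_mul_one_sub_le_of_mul_abs_le hγ (hα _) ((hgap_le (j + 1)).trans (hg_taylor j))⟩

/-- Local convergence estimates for the alternating tangent-line iteration. -/
theorem stmt_13 (U : Set ℝ) (hU : IsOpen U)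
    (f g : ℝ → ℝ) (f' g' : ℝ → ℝ)
    (hf : ∀ x ∈ U, HasDerivAt f (f' x) x) (hg : ∀ x ∈ U, HasDerivAt g (g' x) x)
    (α β γ : ℝ) (hγ : 0 < γ)
    (hfLip : ∀ x ∈ U, ∀ y ∈ U, |f' x - f' y| ≤ α * |x - y|)
    (hgLip : ∀ x ∈ U, ∀ y ∈ U, |g' x - g' y| ≤ β * |x - y|)
    (hgap : ∀ x ∈ U, γ ≤ |f' x - g' x|)
    (x : ℕ → ℝ) (hxU : ∀ k, x k ∈ U)
    (hseg : ∀ k, Set.uIcc (x k) (x (k + 1)) ⊆ U)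
    (hit1 : ∀ k, f (x k) + f' (x k) * (x (k + 1) - x k) = g (x (k + 1)))
    (hit2 : ∀ k, g (x (k + 1)) + g' (x (k + 1)) * (x (k + 2) - x (k + 1)) = f (x (k + 2)))
    (Δ : ℕ → ℝ) (hΔ : ∀ k, Δ k = x (k + 1) - x k) :
    ∀ k : ℕ, 1 ≤ k →
      |Δ k| * (1 - β / 2 * |Δ k|) ≤ α / (2 * γ) * |Δ (k - 1)| ^ 2 ∧
      |Δ (k + 1)| * (1 - α / 2 * |Δ (k + 1)|) ≤ β / (2 * γ) * |Δ k| ^ 2 :=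
  stmt_13_general U f g f' g' hf hg α β γ hγ hfLip hgLip hgap x hxU hseg hit1 hit2 Δ hΔ
end

section
/- Let M₀, M₁ be symmetric operators on ℝⁿ ⊗ ℝᵐ ≅ ℝ^{nm} given by M₀ = B₁⊗I + I⊗B₂ and M₁ = A₁⊗I + I⊗A₂ with A₁, B₁ symmetric n×n and A₂, B₂ symmetric m×m, and M₀ negative definite. Define 𝔯(u⊗v) = ⟨u⊗v, M₁(u⊗v)⟩/⟨u⊗v, −M₀(u⊗v)⟩. Then for unit vectors u, v, 𝔯(u⊗v) = −(uᵀA₁u + vᵀA₂v)/(uᵀB₁u + vᵀB₂v), and the gradient ∇𝔯(u⊗v) lies in the tangent space T_{u⊗v}ℳ₁ = {x⊗v + u⊗y : x ∈ ℝⁿ, y ∈ ℝᵐ} of the rank-one manifold. -/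
/-!
At `u ⊗ v` the Kronecker sum `A ⊗ I + I ⊗ B` acts as `(A u) ⊗ v + u ⊗ (B v)`, so its quadratic
form there is `uᵀAu ‖v‖² + ‖u‖² vᵀBv`; for unit vectors this gives the formula for `𝔯`.
The gradient of `X ↦ Xᵀ M X` is `(M + Mᵀ) X`, and the transpose of a Kronecker sum is again a
Kronecker sum, so the quotient rule writes `∇𝔯(u ⊗ v)` as a linear combination of vectors
`(A u) ⊗ v + u ⊗ (B v)`, all of which lie in the tangent space `{x ⊗ v + u ⊗ y}`.
-/

open Matrix Kronecker
open scoped RealInnerProductSpace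

section Gradient

variable {F : Type*} [NormedAddCommGroup F] [InnerProductSpace ℝ F] [CompleteSpace F]

theorem HasGradientAt.div {f g : F → ℝ} {f' g' x : F} (hf : HasGradientAt f f' x)
    (hg : HasGradientAt g g' x) (hx : g x ≠ 0) :
    HasGradientAt (fun y => f y / g y) ((g x)⁻¹ • f' - (f x / g x ^ 2) • g') x := by
  rw [hasGradientAt_iff_hasFDerivAt] at *
  simp only [div_eq_mul_inv]
  refine (hf.mul ((hasFDerivAt_inv hx).comp x hg)).congr_fderiv ?_
  ext h
  simp
  ring

theorem hasGradientAt_inner_self_apply (T : F →L[ℝ] F) (x : F) :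
    HasGradientAt (fun y => ⟪y, T y⟫) (T x + T.adjoint x) x := by
  refine ((hasFDerivAt_id x).inner ℝ T.hasFDerivAt).congr_fderiv ?_
  ext h
  simp [ContinuousLinearMap.adjoint_inner_left, real_inner_comm, add_comm]

end Gradient

theorem hasGradientAt_dotProduct_mulVec {ι : Type*} [Fintype ι] [DecidableEq ι]
    (M : Matrix ι ι ℝ) (X : EuclideanSpace ℝ ι) :
    HasGradientAt (fun Y : EuclideanSpace ℝ ι => Y.ofLp ⬝ᵥ M *ᵥ Y.ofLp)
      (WithLp.toLp 2 ((M + Mᵀ) *ᵥ X.ofLp)) X := by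
  have h := hasGradientAt_inner_self_apply (toEuclideanCLM (𝕜 := ℝ) M) X
  simp only [inner_toEuclideanCLM] at h
  convert h using 1
  rw [← ContinuousLinearMap.star_eq_adjoint, ← map_star]
  ext i
  simp [star_eq_conjTranspose, add_mulVec]

section RankOne

variable {R ι κ : Type*} [CommRing R]

/-- `(x, y) ↦ x ⊗ v + u ⊗ y`; its range is the tangent space at `u ⊗ v` to the manifold of
rank-one tensors. -/
def rankOneTangentMap (u : ι → R) (v : κ → R) : (ι → R) × (κ → R) →ₗ[R] ι × κ → R where
  toFun xy p := xy.1 p.1 * v p.2 + u p.1 * xy.2 p.2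
  map_add' _ _ := by
    ext
    simp only [Prod.fst_add, Prod.snd_add, Pi.add_apply]
    ring
  map_smul' _ _ := by
    ext
    simp only [Prod.smul_fst, Prod.smul_snd, Pi.smul_apply, smul_eq_mul, RingHom.id_apply]
    ring

theorem mem_range_rankOneTangentMap_iff (u : ι → R) (v : κ → R) (z : ι × κ → R) :
    z ∈ LinearMap.range (rankOneTangentMap u v) ↔
      ∃ (x : ι → R) (y : κ → R), ∀ p, z p = x p.1 * v p.2 + u p.1 * y p.2 := by
  constructor
  · rintro ⟨⟨x, y⟩, rfl⟩
    exact ⟨x, y, fun _ => rfl⟩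
  · rintro ⟨x, y, hz⟩
    exact ⟨(x, y), funext fun p => (hz p).symm⟩

end RankOne

namespace Matrix

variable {R ι κ : Type*} [CommRing R]

theorem kronecker_mulVec_mul_s18 {l k : Type*} [Fintype ι] [Fintype κ]
    (A : Matrix l ι R) (B : Matrix k κ R) (u : ι → R) (v : κ → R) :
    (A ⊗ₖ B) *ᵥ (fun p => u p.1 * v p.2) = fun p => (A *ᵥ u) p.1 * (B *ᵥ v) p.2 := by
  ext p
  simp only [mulVec, dotProduct, kroneckerMap_apply, Fintype.sum_prod_type, Finset.sum_mul_sum]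
  exact Finset.sum_congr rfl fun i _ => Finset.sum_congr rfl fun j _ => by ring

theorem dotProduct_mul_mul [Fintype ι] [Fintype κ] (u x : ι → R) (v y : κ → R) :
    (fun p : ι × κ => u p.1 * v p.2) ⬝ᵥ (fun p => x p.1 * y p.2) = (u ⬝ᵥ x) * (v ⬝ᵥ y) := by
  simp only [dotProduct, Fintype.sum_prod_type, Finset.sum_mul_sum]
  exact Finset.sum_congr rfl fun i _ => Finset.sum_congr rfl fun j _ => by ring

variable [DecidableEq ι] [DecidableEq κ]

def kroneckerSum (A : Matrix ι ι R) (B : Matrix κ κ R) : Matrix (ι × κ) (ι × κ) R :=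
  A ⊗ₖ 1 + 1 ⊗ₖ B

theorem transpose_kroneckerSum (A : Matrix ι ι R) (B : Matrix κ κ R) :
    (kroneckerSum A B)ᵀ = kroneckerSum Aᵀ Bᵀ := by
  rw [kroneckerSum, kroneckerSum, transpose_add, ← kroneckerMap_transpose,
    ← kroneckerMap_transpose, transpose_one, transpose_one]

variable [Fintype ι] [Fintype κ]

theorem kroneckerSum_mulVec_mul (A : Matrix ι ι R) (B : Matrix κ κ R) (u : ι → R) (v : κ → R) :
    kroneckerSum A B *ᵥ (fun p => u p.1 * v p.2) = rankOneTangentMap u v (A *ᵥ u, B *ᵥ v) := by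
  rw [kroneckerSum, add_mulVec, kronecker_mulVec_mul_s18, kronecker_mulVec_mul_s18, one_mulVec,
    one_mulVec]
  rfl

theorem dotProduct_kroneckerSum_mulVec_mul (A : Matrix ι ι R) (B : Matrix κ κ R)
    (u : ι → R) (v : κ → R) :
    (fun p => u p.1 * v p.2) ⬝ᵥ kroneckerSum A B *ᵥ (fun p => u p.1 * v p.2) =
      (u ⬝ᵥ A *ᵥ u) * (v ⬝ᵥ v) + (u ⬝ᵥ u) * (v ⬝ᵥ B *ᵥ v) := by
  rw [kroneckerSum_mulVec_mul]
  exact (dotProduct_add _ _ _).trans (congrArg₂ (· + ·) (dotProduct_mul_mul ..)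
    (dotProduct_mul_mul ..))

theorem add_transpose_kroneckerSum_mulVec_mem_range (A : Matrix ι ι R) (B : Matrix κ κ R)
    (u : ι → R) (v : κ → R) :
    (kroneckerSum A B + (kroneckerSum A B)ᵀ) *ᵥ (fun p => u p.1 * v p.2) ∈
      LinearMap.range (rankOneTangentMap u v) := by
  rw [transpose_kroneckerSum, add_mulVec, kroneckerSum_mulVec_mul, kroneckerSum_mulVec_mul]
  exact add_mem (LinearMap.mem_range_self _ _) (LinearMap.mem_range_self _ _)

end Matrix

theorem stmt_18_general {n m : ℕ}
    (A₁ B₁ : Matrix (Fin n) (Fin n) ℝ) (A₂ B₂ : Matrix (Fin m) (Fin m) ℝ)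
    (M₀ M₁ : Matrix (Fin n × Fin m) (Fin n × Fin m) ℝ)
    (hM₀ : M₀ = B₁ ⊗ₖ (1 : Matrix (Fin m) (Fin m) ℝ) + (1 : Matrix (Fin n) (Fin n) ℝ) ⊗ₖ B₂)
    (hM₁ : M₁ = A₁ ⊗ₖ (1 : Matrix (Fin m) (Fin m) ℝ) + (1 : Matrix (Fin n) (Fin n) ℝ) ⊗ₖ A₂)
    (hM₀neg : (-M₀).PosDef)
    (R : EuclideanSpace ℝ (Fin n × Fin m) → ℝ)
    (hR : ∀ X : EuclideanSpace ℝ (Fin n × Fin m),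
      R X = ((fun p => X p) ⬝ᵥ M₁.mulVec (fun p => X p)) /
        -((fun p => X p) ⬝ᵥ M₀.mulVec (fun p => X p)))
    (u : Fin n → ℝ) (v : Fin m → ℝ)
    (hu : u ⬝ᵥ u = 1) (hv : v ⬝ᵥ v = 1)
    (w : EuclideanSpace ℝ (Fin n × Fin m)) (hw : ∀ p, w p = u p.1 * v p.2) :
    R w = -((u ⬝ᵥ A₁.mulVec u + v ⬝ᵥ A₂.mulVec v) /
        (u ⬝ᵥ B₁.mulVec u + v ⬝ᵥ B₂.mulVec v)) ∧
      ∃ (x : Fin n → ℝ) (y : Fin m → ℝ),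
        ∀ p : Fin n × Fin m, gradient R w p = x p.1 * v p.2 + u p.1 * y p.2 := by
  have hw' : w.ofLp = fun p => u p.1 * v p.2 := funext hw
  have hquad (A B) : w.ofLp ⬝ᵥ kroneckerSum A B *ᵥ w.ofLp = u ⬝ᵥ A *ᵥ u + v ⬝ᵥ B *ᵥ v := by
    rw [hw', dotProduct_kroneckerSum_mulVec_mul, hu, hv, mul_one, one_mul]
  have hquad₁ : w.ofLp ⬝ᵥ M₁ *ᵥ w.ofLp = u ⬝ᵥ A₁ *ᵥ u + v ⬝ᵥ A₂ *ᵥ v := hM₁ ▸ hquad A₁ A₂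
  have hquad₀ : w.ofLp ⬝ᵥ M₀ *ᵥ w.ofLp = u ⬝ᵥ B₁ *ᵥ u + v ⬝ᵥ B₂ *ᵥ v := hM₀ ▸ hquad B₁ B₂
  have hw0 : w.ofLp ≠ 0 := by
    intro h
    have h1 := dotProduct_mul_mul u u v v
    rw [hu, hv, ← hw', h, zero_dotProduct] at h1
    exact zero_ne_one (h1.trans (mul_one 1))
  have hden : w.ofLp ⬝ᵥ (-M₀) *ᵥ w.ofLp ≠ 0 := by
    simpa using (hM₀neg.dotProduct_mulVec_pos hw0).ne'
  have hRdiv : R = fun Y => Y.ofLp ⬝ᵥ M₁ *ᵥ Y.ofLp / Y.ofLp ⬝ᵥ (-M₀) *ᵥ Y.ofLp :=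
    funext fun Y => by rw [hR, neg_mulVec, dotProduct_neg]
  refine ⟨by rw [hR, hquad₁, hquad₀, div_neg], ?_⟩
  have hgrad := (hasGradientAt_dotProduct_mulVec M₁ w).div
    (hasGradientAt_dotProduct_mulVec (-M₀) w) hden
  rw [← hRdiv] at hgrad
  rw [← mem_range_rankOneTangentMap_iff, hgrad.gradient]
  simp only [WithLp.ofLp_sub, WithLp.ofLp_smul, transpose_neg, ← neg_add,
    neg_mulVec, hw', hM₀, hM₁]
  exact sub_mem (Submodule.smul_mem _ _ (add_transpose_kroneckerSum_mulVec_mem_range ..))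
    (Submodule.smul_mem _ _ (neg_mem (add_transpose_kroneckerSum_mulVec_mem_range ..)))

/-- For the Sylvester-form operators `M₀ = B₁⊗I + I⊗B₂` (negative definite) and
`M₁ = A₁⊗I + I⊗A₂`, at unit vectors `u, v` the Rayleigh quotient satisfies
`𝔯(u⊗v) = −(uᵀA₁u + vᵀA₂v)/(uᵀB₁u + vᵀB₂v)` and its gradient lies in the tangent
space `{x⊗v + u⊗y}` of the rank-one manifold. -/
theorem stmt_18 {n m : ℕ}
    (A₁ B₁ : Matrix (Fin n) (Fin n) ℝ) (A₂ B₂ : Matrix (Fin m) (Fin m) ℝ)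
    (hA₁ : A₁.IsSymm) (hB₁ : B₁.IsSymm) (hA₂ : A₂.IsSymm) (hB₂ : B₂.IsSymm)
    (M₀ M₁ : Matrix (Fin n × Fin m) (Fin n × Fin m) ℝ)
    (hM₀ : M₀ = B₁ ⊗ₖ (1 : Matrix (Fin m) (Fin m) ℝ) + (1 : Matrix (Fin n) (Fin n) ℝ) ⊗ₖ B₂)
    (hM₁ : M₁ = A₁ ⊗ₖ (1 : Matrix (Fin m) (Fin m) ℝ) + (1 : Matrix (Fin n) (Fin n) ℝ) ⊗ₖ A₂)
    (hM₀neg : (-M₀).PosDef)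
    (R : EuclideanSpace ℝ (Fin n × Fin m) → ℝ)
    (hR : ∀ X : EuclideanSpace ℝ (Fin n × Fin m),
      R X = ((fun p => X p) ⬝ᵥ M₁.mulVec (fun p => X p)) /
        -((fun p => X p) ⬝ᵥ M₀.mulVec (fun p => X p)))
    (u : Fin n → ℝ) (v : Fin m → ℝ)
    (hu : u ⬝ᵥ u = 1) (hv : v ⬝ᵥ v = 1)
    (w : EuclideanSpace ℝ (Fin n × Fin m)) (hw : ∀ p, w p = u p.1 * v p.2) :
    R w = -((u ⬝ᵥ A₁.mulVec u + v ⬝ᵥ A₂.mulVec v) /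
        (u ⬝ᵥ B₁.mulVec u + v ⬝ᵥ B₂.mulVec v)) ∧
      ∃ (x : Fin n → ℝ) (y : Fin m → ℝ),
        ∀ p : Fin n × Fin m, gradient R w p = x p.1 * v p.2 + u p.1 * y p.2 :=
  stmt_18_general A₁ B₁ A₂ B₂ M₀ M₁ hM₀ hM₁ hM₀neg R hR u v hu hv w hw
end
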